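/- Let N be a positive integer and let p be a prime with p ≡ 1 (mod 4) and p > max(N, 7). Then there exist infinitely many primes q ≥ 5 such that q² ≡ −1 (mod p), q ≡ 1 (mod 4), and every prime divisor of N is a quadratic residue modulo q. -/

import Mathlib

/-- `a` is a quadratic residue modulo `q`: there is an integer `x` with `x² ≡ a (mod q)`. -/
def IsQuadResidue (a q : ℕ) : Prop := ∃ x : ℤ, x ^ 2 ≡ (a : ℤ) [ZMOD (q : ℤ)]

/-!
By the Chinese remainder theorem the conditions `q ≡ 1 (mod 8N)` and `q ≡ i (mod p)`, where
`i² = -1` in `ZMod p`, cut out a single unit class modulo `8Np`, which contains infinitely many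
primes by Dirichlet's theorem. For such a prime `q`, `q ≡ 1 (mod 8)` makes `2` a square
mod `q`, and for an odd prime `d ∣ N` quadratic reciprocity (`q ≡ 1 (mod 4)`) gives
`(d/q) = (q/d) = (1/d) = 1`.
-/

theorem IsSquare.isQuadResidue {a q : ℕ} (h : IsSquare (a : ZMod q)) : IsQuadResidue a q := by
  obtain ⟨y, hy⟩ := h
  refine ⟨(y.cast : ℤ), ?_⟩
  rw [← ZMod.intCast_eq_intCast_iff]
  push_cast
  rw [pow_two, hy]

theorem Nat.infinite_setOf_prime_and_modEq_and_modEq {m n a b : ℕ} (hmn : m.Coprime n)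
    (hm : m ≠ 0) (hn : n ≠ 0) (ha : a.Coprime m) (hb : b.Coprime n) :
    {q : ℕ | q.Prime ∧ q ≡ a [MOD m] ∧ q ≡ b [MOD n]}.Infinite := by
  obtain ⟨c, hca, hcb⟩ := Nat.chineseRemainder hmn a b
  have hc : c.Coprime (m * n) := Nat.Coprime.mul_right (hca.gcd_eq.trans ha) (hcb.gcd_eq.trans hb)
  refine (Nat.infinite_setOfPred_prime_and_modEq (mul_ne_zero hm hn) hc).mono ?_
  rintro q ⟨hq, hqc⟩
  exact ⟨hq, (hqc.of_mul_right n).trans hca, (hqc.of_mul_left m).trans hcb⟩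

theorem ZMod.exists_coprime_natCast_sq_eq_neg_one {p : ℕ} [Fact p.Prime] (hp : p % 4 = 1) :
    ∃ r : ℕ, r.Coprime p ∧ (r : ZMod p) ^ 2 = -1 := by
  obtain ⟨i, hi⟩ : IsSquare (-1 : ZMod p) := ZMod.exists_sq_eq_neg_one_iff.mpr (by omega)
  have hunit : IsUnit i := IsUnit.of_mul_eq_one (-i) (by rw [mul_neg, ← hi, neg_neg])
  refine ⟨i.val, (ZMod.isUnit_iff_coprime _ p).mp ?_, ?_⟩
  · rwa [ZMod.natCast_zmod_val]
  · rw [ZMod.natCast_zmod_val, sq, hi]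

theorem ZMod.isSquare_natCast_of_dvd_of_modEq_one {q N d : ℕ} [Fact q.Prime]
    (hq : q ≡ 1 [MOD 8 * N]) (hd : d.Prime) (hdN : d ∣ N) : IsSquare (d : ZMod q) := by
  have hq8 : q % 8 = 1 := hq.of_mul_right N
  rcases eq_or_ne d 2 with rfl | hd2
  · exact_mod_cast (ZMod.exists_sq_eq_two_iff (by omega)).mpr (Or.inl hq8)
  · have : Fact d.Prime := ⟨hd⟩
    rw [ZMod.exists_sq_eq_prime_iff_of_mod_four_eq_one (by omega) hd2,
      (ZMod.natCast_eq_natCast_iff q 1 d).mpr (hq.of_dvd (dvd_mul_of_dvd_right hdN 8)),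
      Nat.cast_one]
    exact IsSquare.one

/-- Given `N > 0` and a prime `p ≡ 1 (mod 4)` with `p > max(N,7)`, there are infinitely
many primes `q ≥ 5` with `q² ≡ -1 (mod p)`, `q ≡ 1 (mod 4)` and every prime divisor
of `N` a quadratic residue modulo `q`. -/
theorem infinite_auxiliary_primes (N : ℕ) (hN : 0 < N) (p : ℕ) (hp : p.Prime)
    (hp4 : p % 4 = 1) (hpN : p > max N 7) :
    {q : ℕ | q.Prime ∧ 5 ≤ q ∧ (q : ℤ) ^ 2 ≡ -1 [ZMOD (p : ℤ)] ∧ q % 4 = 1 ∧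
      ∀ d : ℕ, d.Prime → d ∣ N → IsQuadResidue d q}.Infinite := by
  have : Fact p.Prime := ⟨hp⟩
  obtain ⟨r, hrp, hr⟩ := ZMod.exists_coprime_natCast_sq_eq_neg_one hp4
  have h8Np : (8 * N).Coprime p :=
    Nat.Coprime.mul_left ((Nat.coprime_two_left.mpr (hp.odd_of_ne_two (by omega))).pow_left 3)
      (Nat.coprime_of_lt_prime hN.ne' (by omega) hp).symm
  refine (Nat.infinite_setOf_prime_and_modEq_and_modEq h8Np (by omega) hp.ne_zero
    (Nat.coprime_one_left _) hrp).mono ?_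
  rintro q ⟨hq, hq1, hqr⟩
  have : Fact q.Prime := ⟨hq⟩
  have hq8 : q % 8 = 1 := hq1.of_mul_right N
  refine ⟨hq, by have := hq.two_le; omega, ?_, by omega, fun d hd hdN => ?_⟩
  · rw [← ZMod.intCast_eq_intCast_iff]
    push_cast
    rwa [(ZMod.natCast_eq_natCast_iff q r p).mpr hqr]
  · exact (ZMod.isSquare_natCast_of_dvd_of_modEq_one hq1 hd hdN).isQuadResidue
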